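/- arXiv:2205.13307 — 2 statements merged into one kernel-verified Lean document; each statement's English description precedes it below -/
import Mathlib

section
/- Let Y be an n×n (here d×d) positive semidefinite symmetric random matrix, let F and G be real random variables with |F| ≤ G almost surely, and suppose E|Y_{ij} F| < ∞ for all i,j. Then for any σ-field 𝒢, ‖E[Y F | 𝒢]‖_{H.S.} ≤ ‖E[Y G | 𝒢]‖_{H.S.} almost surely, where ‖·‖_{H.S.} is the Hilbert–Schmidt (Frobenius) norm. -/
open MeasureTheory ProbabilityTheory Matrix

/-! Write `A = 𝔼[Y F | 𝒢]` and `B = 𝔼[Y G | 𝒢]` (entrywise). Since `G ∓ F ≥ 0`, the matrices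
`B ∓ A = 𝔼[(G ∓ F) Y | 𝒢]` are conditional expectations of positive semidefinite matrices, hence
a.s. positive semidefinite: test the quadratic form on the countably many rational vectors and
pass to the limit. For symmetric `A`, `B` we have `‖B‖² - ‖A‖² = tr((B - A)(B + A))`, and the trace
of a product of two positive semidefinite matrices is nonnegative. -/

namespace Matrix

open scoped MatrixOrder ComplexOrder in
lemma PosSemidef.trace_mul_nonneg {𝕜 n : Type*} [RCLike 𝕜] [Fintype n] [DecidableEq n]
    {P Q : Matrix n n 𝕜} (hP : P.PosSemidef) (hQ : Q.PosSemidef) : 0 ≤ (P * Q).trace := by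
  set S := CFC.sqrt P
  have hS : Sᴴ = S := (nonneg_iff_posSemidef.mp (CFC.sqrt_nonneg P)).1
  have hP_eq : P = S * S := (CFC.sqrt_mul_sqrt_self P hP.nonneg).symm
  have hSQS : (S * Q * Sᴴ).PosSemidef := hQ.mul_mul_conjTranspose_same S
  rw [hS] at hSQS
  calc (0 : 𝕜) ≤ (S * Q * S).trace := hSQS.trace_nonneg
    _ = (P * Q).trace := by rw [hP_eq, mul_assoc, trace_mul_comm, mul_assoc, trace_mul_comm]

lemma trace_mul_self_of_isHermitian {n : Type*} [Fintype n] {A : Matrix n n ℝ}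
    (hA : A.IsHermitian) : (A * A).trace = ∑ i, ∑ j, A i j ^ 2 := by
  refine Finset.sum_congr rfl fun i _ => Finset.sum_congr rfl fun j _ => ?_
  simp only [sq, ← hA.apply i j, star_trivial]

lemma sum_sq_le_sum_sq_of_posSemidef_sub_of_posSemidef_add {n : Type*} [Fintype n]
    {A B : Matrix n n ℝ} (hsub : (B - A).PosSemidef) (hadd : (B + A).PosSemidef) :
    ∑ i, ∑ j, A i j ^ 2 ≤ ∑ i, ∑ j, B i j ^ 2 := by
  classical
  have hsymm : ∀ i j, A j i = A i j ∧ B j i = B i j := fun i j => by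
    have h₁ := hsub.isHermitian.apply i j
    have h₂ := hadd.isHermitian.apply i j
    simp only [star_trivial, sub_apply, add_apply] at h₁ h₂
    constructor <;> linarith
  have hA : A.IsHermitian := .ext fun i j => (hsymm i j).1
  have hB : B.IsHermitian := .ext fun i j => (hsymm i j).2
  have key : ((B - A) * (B + A)).trace = (B * B).trace - (A * A).trace := by
    rw [sub_mul, mul_add, mul_add, trace_sub, trace_add, trace_add, trace_mul_comm A B]
    ring
  rw [← trace_mul_self_of_isHermitian hA, ← trace_mul_self_of_isHermitian hB, ← sub_nonneg, ← key]
  exact hsub.trace_mul_nonneg hadd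

lemma PosSemidef.of_forall_ratCast_dotProduct_mulVec_nonneg {n : Type*} [Fintype n]
    {M : Matrix n n ℝ} (hM : M.IsHermitian)
    (h : ∀ x : n → ℚ, 0 ≤ (fun i => (x i : ℝ)) ⬝ᵥ M *ᵥ fun i => (x i : ℝ)) : M.PosSemidef := by
  refine .of_dotProduct_mulVec_nonneg hM fun y => ?_
  have hdense : DenseRange fun (x : n → ℚ) i => (x i : ℝ) :=
    DenseRange.piMap fun _ => Rat.denseRange_cast
  refine hdense.induction_on (p := fun y => 0 ≤ star y ⬝ᵥ M *ᵥ y) y ?_ h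
  exact isClosed_le continuous_const
    (continuous_id.star.dotProduct (continuous_const.matrix_mulVec continuous_id))

lemma dotProduct_mulVec_eq_sum_prod {R n : Type*} [CommSemiring R] [Fintype n]
    (M : Matrix n n R) (x : n → R) :
    x ⬝ᵥ M *ᵥ x = ∑ p : n × n, (x p.1 * x p.2) • M p.1 p.2 := by
  simp only [dotProduct, mulVec, Finset.mul_sum, smul_eq_mul, ← Finset.univ_product_univ,
    Finset.sum_product]
  refine Finset.sum_congr rfl fun i _ => Finset.sum_congr rfl fun j _ => ?_
  ring

end Matrix

section CondExpMatrix

variable {Ω m n : Type*} {m0 : MeasurableSpace Ω} {μ : Measure Ω}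

noncomputable def condExpMatrix (𝒢 : MeasurableSpace Ω) (μ : Measure[m0] Ω)
    (Z : Ω → Matrix m n ℝ) (ω : Ω) : Matrix m n ℝ :=
  Matrix.of fun i j => μ[fun ω' => Z ω' i j|𝒢] ω

variable [Countable m] [Countable n] {Z₁ Z₂ : Ω → Matrix m n ℝ}

lemma condExpMatrix_add (h₁ : ∀ i j, Integrable (fun ω => Z₁ ω i j) μ)
    (h₂ : ∀ i j, Integrable (fun ω => Z₂ ω i j) μ) (𝒢 : MeasurableSpace Ω) :
    ∀ᵐ ω ∂μ, condExpMatrix 𝒢 μ (Z₁ + Z₂) ω = condExpMatrix 𝒢 μ Z₁ ω + condExpMatrix 𝒢 μ Z₂ ω := by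
  have h : ∀ᵐ ω ∂μ, ∀ i j, μ[fun ω' => (Z₁ + Z₂) ω' i j|𝒢] ω =
      μ[fun ω' => Z₁ ω' i j|𝒢] ω + μ[fun ω' => Z₂ ω' i j|𝒢] ω := by
    simp only [ae_all_iff]
    exact fun i j => condExp_add (h₁ i j) (h₂ i j) 𝒢
  filter_upwards [h] with ω hω
  ext i j
  exact hω i j

lemma condExpMatrix_sub (h₁ : ∀ i j, Integrable (fun ω => Z₁ ω i j) μ)
    (h₂ : ∀ i j, Integrable (fun ω => Z₂ ω i j) μ) (𝒢 : MeasurableSpace Ω) :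
    ∀ᵐ ω ∂μ, condExpMatrix 𝒢 μ (Z₁ - Z₂) ω = condExpMatrix 𝒢 μ Z₁ ω - condExpMatrix 𝒢 μ Z₂ ω := by
  have h : ∀ᵐ ω ∂μ, ∀ i j, μ[fun ω' => (Z₁ - Z₂) ω' i j|𝒢] ω =
      μ[fun ω' => Z₁ ω' i j|𝒢] ω - μ[fun ω' => Z₂ ω' i j|𝒢] ω := by
    simp only [ae_all_iff]
    exact fun i j => condExp_sub (h₁ i j) (h₂ i j) 𝒢
  filter_upwards [h] with ω hω
  ext i j
  exact hω i j

variable [Fintype n] {Z : Ω → Matrix n n ℝ}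

lemma condExpMatrix_dotProduct_mulVec (hZ : ∀ i j, Integrable (fun ω => Z ω i j) μ)
    (𝒢 : MeasurableSpace Ω) (x : n → ℝ) :
    (fun ω => x ⬝ᵥ condExpMatrix 𝒢 μ Z ω *ᵥ x) =ᵐ[μ] μ[fun ω => x ⬝ᵥ Z ω *ᵥ x|𝒢] := by
  simp only [dotProduct_mulVec_eq_sum_prod]
  set c : n × n → ℝ := fun p => x p.1 * x p.2
  have hsum := condExp_finsetSum (s := Finset.univ) (m := 𝒢)
    (f := fun p ω => c p • Z ω p.1 p.2) fun p _ => (hZ p.1 p.2).smul (c p)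
  have hsmul : ∀ᵐ ω ∂μ, ∀ p,
      μ[fun ω => c p • Z ω p.1 p.2|𝒢] ω = c p • μ[fun ω => Z ω p.1 p.2|𝒢] ω :=
    ae_all_iff.mpr fun p => condExp_smul (c p) (fun ω => Z ω p.1 p.2) 𝒢
  rw [Finset.sum_fn] at hsum
  filter_upwards [hsum, hsmul] with ω h₁ h₂
  rw [h₁, Finset.sum_apply]
  exact Finset.sum_congr rfl fun p _ => (h₂ p).symm

lemma ae_posSemidef_condExpMatrix (hZ : ∀ i j, Integrable (fun ω => Z ω i j) μ)
    (hpsd : ∀ᵐ ω ∂μ, (Z ω).PosSemidef) (𝒢 : MeasurableSpace Ω) :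
    ∀ᵐ ω ∂μ, (condExpMatrix 𝒢 μ Z ω).PosSemidef := by
  have hherm : ∀ᵐ ω ∂μ, (condExpMatrix 𝒢 μ Z ω).IsHermitian := by
    have h : ∀ᵐ ω ∂μ, ∀ i j, μ[fun ω' => Z ω' j i|𝒢] ω = μ[fun ω' => Z ω' i j|𝒢] ω := by
      simp only [ae_all_iff]
      exact fun i j => condExp_congr_ae (hpsd.mono fun ω h => h.isHermitian.apply i j)
    filter_upwards [h] with ω hω
    exact .ext hω
  have hquad : ∀ᵐ ω ∂μ, ∀ x : n → ℚ,
      0 ≤ (fun i => (x i : ℝ)) ⬝ᵥ condExpMatrix 𝒢 μ Z ω *ᵥ fun i => (x i : ℝ) := by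
    refine ae_all_iff.mpr fun x => ?_
    have h : 0 ≤ᵐ[μ] μ[fun ω => (fun i => (x i : ℝ)) ⬝ᵥ Z ω *ᵥ fun i => (x i : ℝ)|𝒢] :=
      condExp_nonneg (hpsd.mono fun ω h => by simpa using h.dotProduct_mulVec_nonneg _)
    filter_upwards [h, condExpMatrix_dotProduct_mulVec hZ 𝒢 _] with ω h₁ h₂
    exact h₂ ▸ h₁
  filter_upwards [hherm, hquad] with ω h₁ h₂
  exact .of_forall_ratCast_dotProduct_mulVec_nonneg h₁ h₂

end CondExpMatrix

theorem stmt_6_general {Ω : Type*} {m0 : MeasurableSpace Ω} (μ : Measure Ω)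
    (d : ℕ) (Y : Ω → Matrix (Fin d) (Fin d) ℝ)
    (hpsd : ∀ ω, (Y ω).PosSemidef)
    (F G : Ω → ℝ) (hFG : ∀ᵐ ω ∂μ, |F ω| ≤ G ω)
    (hintF : ∀ i j, Integrable (fun ω => Y ω i j * F ω) μ)
    (hintG : ∀ i j, Integrable (fun ω => Y ω i j * G ω) μ)
    (𝒢 : MeasurableSpace Ω) :
    ∀ᵐ ω ∂μ,
      Real.sqrt (∑ i, ∑ j, (condExp 𝒢 μ (fun ω' => Y ω' i j * F ω') ω) ^ 2) ≤
      Real.sqrt (∑ i, ∑ j, (condExp 𝒢 μ (fun ω' => Y ω' i j * G ω') ω) ^ 2) := by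
  set YF : Ω → Matrix (Fin d) (Fin d) ℝ := fun ω => of fun i j => Y ω i j * F ω
  set YG : Ω → Matrix (Fin d) (Fin d) ℝ := fun ω => of fun i j => Y ω i j * G ω
  have hsub : ∀ᵐ ω ∂μ, (YG ω - YF ω).PosSemidef := by
    filter_upwards [hFG] with ω hω
    convert (hpsd ω).smul (sub_nonneg.mpr (le_of_abs_le hω)) using 1
    ext i j
    simp only [YF, YG, Matrix.sub_apply, of_apply, Matrix.smul_apply, smul_eq_mul]
    ring
  have hadd : ∀ᵐ ω ∂μ, (YG ω + YF ω).PosSemidef := by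
    filter_upwards [hFG] with ω hω
    convert (hpsd ω).smul (neg_le_iff_add_nonneg.mp (neg_le_of_abs_le hω)) using 1
    ext i j
    simp only [YF, YG, Matrix.add_apply, of_apply, Matrix.smul_apply, smul_eq_mul]
    ring
  filter_upwards
    [ae_posSemidef_condExpMatrix (Z := YG - YF) (fun i j => (hintG i j).sub (hintF i j)) hsub 𝒢,
    ae_posSemidef_condExpMatrix (Z := YG + YF) (fun i j => (hintG i j).add (hintF i j)) hadd 𝒢,
    condExpMatrix_sub (Z₁ := YG) (Z₂ := YF) hintG hintF 𝒢,
    condExpMatrix_add (Z₁ := YG) (Z₂ := YF) hintG hintF 𝒢] with ω h₁ h₂ e₁ e₂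
  rw [e₁] at h₁
  rw [e₂] at h₂
  exact Real.sqrt_le_sqrt (sum_sq_le_sum_sq_of_posSemidef_sub_of_posSemidef_add h₁ h₂)

/-- Comparison lemma for conditional expectations of PSD-matrix-weighted random
variables, in Hilbert–Schmidt (Frobenius) norm. -/
theorem stmt_6 {Ω : Type*} {m0 : MeasurableSpace Ω} (μ : Measure Ω) [IsProbabilityMeasure μ]
    (d : ℕ) (Y : Ω → Matrix (Fin d) (Fin d) ℝ)
    (hpsd : ∀ ω, (Y ω).PosSemidef)
    (F G : Ω → ℝ) (hFG : ∀ᵐ ω ∂μ, |F ω| ≤ G ω)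
    (hintF : ∀ i j, Integrable (fun ω => Y ω i j * F ω) μ)
    (hintG : ∀ i j, Integrable (fun ω => Y ω i j * G ω) μ)
    (𝒢 : MeasurableSpace Ω) (h𝒢 : 𝒢 ≤ m0) :
    ∀ᵐ ω ∂μ,
      Real.sqrt (∑ i, ∑ j, (condExp 𝒢 μ (fun ω' => Y ω' i j * F ω') ω) ^ 2) ≤
      Real.sqrt (∑ i, ∑ j, (condExp 𝒢 μ (fun ω' => Y ω' i j * G ω') ω) ^ 2) :=
  stmt_6_general (m0 := m0) μ d Y hpsd F G hFG hintF hintG 𝒢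
end

section
/- Let Y be a random vector in ℝ^d with E|Y|^k < ∞ for some integer k ≥ 2, and let 𝒢 be any σ-field. Then almost surely |E[Y^{⊗k} | 𝒢]| ≤ ‖E[Y^{⊗2} |Y|^{k-2} | 𝒢]‖_{H.S.}, where Y^{⊗k} denotes the k-fold tensor power, |·| on tensors is the Euclidean (Frobenius) norm of the corresponding array, and ‖·‖_{H.S.} is the Frobenius norm on d×d matrices. -/
/-!
Write `T = E[Y^{⊗k} | 𝒢]` and `M = E[Y^{⊗2} |Y|^{k-2} | 𝒢]`. For a fixed vector `y`, Cauchy–Schwarz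
gives `⟨y, Y⟩^k ≤ ⟨y, Y⟩^2 |y|^{k-2} |Y|^{k-2}`; expanding both sides and conditioning yields
`⟨y^{⊗k}, T⟩ ≤ |y|^{k-2} ⟨y^{⊗2}, M⟩` a.s. By continuity in `y` this holds a.s. for all `y` at
once, so we may substitute `y = Y`: `⟨Y^{⊗k}, T⟩ ≤ ⟨Y^{⊗2}|Y|^{k-2}, M⟩`. Conditioning once more
(pulling out the `𝒢`-measurable `T` and `M`) turns this into `|T|² ≤ ‖M‖²`.
-/

open MeasureTheory ProbabilityTheory Finset

section Algebra

variable {ι : Type*} [Fintype ι]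

theorem sum_mul_pow_eq_sum_prod_mul_prod (y v : ι → ℝ) (k : ℕ) :
    (∑ j, y j * v j) ^ k = ∑ i : Fin k → ι, (∏ l, y (i l)) * ∏ l, v (i l) := by
  rw [← Fin.prod_const, Fintype.prod_sum]
  simp only [prod_mul_distrib]

theorem sum_mul_sq_eq_sum_prod (y v : ι → ℝ) :
    (∑ j, y j * v j) ^ 2 = ∑ p : ι × ι, y p.1 * y p.2 * (v p.1 * v p.2) := by
  rw [sq, sum_mul_sum, ← Finset.sum_product']
  exact sum_congr rfl fun p _ => by ring

theorem abs_sum_mul_le_sqrt_mul_sqrt (y v : ι → ℝ) :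
    |∑ j, y j * v j| ≤ √(∑ j, y j ^ 2) * √(∑ j, v j ^ 2) := by
  refine abs_le.2 ⟨?_, Real.sum_mul_le_sqrt_mul_sqrt _ y v⟩
  have := Real.sum_mul_le_sqrt_mul_sqrt univ (-y) v
  simp only [Pi.neg_apply, neg_mul, sum_neg_distrib, neg_sq] at this
  linarith

theorem abs_le_sqrt_sum_sq (x : ι → ℝ) (j : ι) : |x j| ≤ √(∑ i, x i ^ 2) :=
  Real.abs_le_sqrt (single_le_sum (fun i _ => sq_nonneg (x i)) (mem_univ j))

end Algebra

theorem pow_le_sq_mul_pow_sub_two {s c : ℝ} {k : ℕ} (hk : 2 ≤ k) (h : |s| ≤ c) :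
    s ^ k ≤ s ^ 2 * c ^ (k - 2) := by
  calc s ^ k = s ^ 2 * s ^ (k - 2) := by rw [← pow_add, Nat.add_sub_cancel' hk]
    _ ≤ s ^ 2 * c ^ (k - 2) := by
      refine mul_le_mul_of_nonneg_left ?_ (sq_nonneg s)
      calc s ^ (k - 2) ≤ |s| ^ (k - 2) := (le_abs_self _).trans (abs_pow s _).le
        _ ≤ c ^ (k - 2) := pow_le_pow_left₀ (abs_nonneg s) h _

section Probability

variable {Ω : Type*} {m0 : MeasurableSpace Ω} {μ : Measure Ω}

theorem ae_forall_le_of_forall_ae_le {X : Type*} [TopologicalSpace X]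
    [TopologicalSpace.SeparableSpace X] {f g : X → Ω → ℝ} (hf : ∀ ω, Continuous (f · ω))
    (hg : ∀ ω, Continuous (g · ω)) (h : ∀ x, f x ≤ᵐ[μ] g x) :
    ∀ᵐ ω ∂μ, ∀ x, f x ω ≤ g x ω := by
  obtain ⟨D, hD, hDdense⟩ := TopologicalSpace.exists_countable_dense X
  filter_upwards [(ae_ball_iff hD).2 fun x _ => h x] with ω hω x
  exact (isClosed_le (hf ω) (hg ω)).closure_subset_iff.2 hω (hDdense x)

section CondExp

variable {𝒢 : MeasurableSpace Ω} {α : Type*} [Fintype α]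

theorem condExp_sum_const_mul (c : α → ℝ) {g : α → Ω → ℝ} (hg : ∀ a, Integrable (g a) μ) :
    μ[fun ω => ∑ a, c a * g a ω|𝒢] =ᵐ[μ] fun ω => ∑ a, c a * μ[g a|𝒢] ω := by
  have hsum : (fun ω => ∑ a, c a * g a ω) = ∑ a, c a • g a := by
    ext ω; simp [Finset.sum_apply]
  rw [hsum]
  filter_upwards [condExp_finsetSum (s := univ) (fun a _ => (hg a).smul (c a)) 𝒢,
    ae_all_iff.2 fun a => condExp_smul (c a) (g a) 𝒢] with ω hadd hsmul
  simp only [hadd, Finset.sum_apply, hsmul, Pi.smul_apply, smul_eq_mul]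

variable {P : α → Ω → ℝ} {w : Ω → ℝ}

omit [Fintype α] in
theorem integrable_mul_condExp_mul (h𝒢 : 𝒢 ≤ m0) (hP : ∀ a, Integrable (P a) μ)
    (hw : StronglyMeasurable[𝒢] w) (hbd : ∀ a ω, |w ω * μ[P a|𝒢] ω| ≤ 1) (a : α) :
    Integrable (fun ω => w ω * μ[P a|𝒢] ω * P a ω) μ :=
  (hP a).bdd_mul ((hw.mul stronglyMeasurable_condExp).mono h𝒢).aestronglyMeasurable
    (ae_of_all _ fun ω => (Real.norm_eq_abs _).trans_le (hbd a ω))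

theorem condExp_sum_mul_condExp_mul [IsFiniteMeasure μ] (h𝒢 : 𝒢 ≤ m0)
    (hP : ∀ a, Integrable (P a) μ)
    (hw : StronglyMeasurable[𝒢] w) (hbd : ∀ a ω, |w ω * μ[P a|𝒢] ω| ≤ 1) :
    μ[fun ω => ∑ a, w ω * μ[P a|𝒢] ω * P a ω|𝒢] =ᵐ[μ]
      fun ω => w ω * ∑ a, μ[P a|𝒢] ω ^ 2 := by
  have hpull : ∀ a, μ[(fun ω => w ω * μ[P a|𝒢] ω) * P a|𝒢] =ᵐ[μ]
      (fun ω => w ω * μ[P a|𝒢] ω) * μ[P a|𝒢] := fun a =>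
    condExp_stronglyMeasurable_mul_of_bound h𝒢 (hw.mul stronglyMeasurable_condExp) (hP a) 1
      (ae_of_all _ fun ω => (Real.norm_eq_abs _).trans_le (hbd a ω))
  have hsum : (fun ω => ∑ a, w ω * μ[P a|𝒢] ω * P a ω) =
      ∑ a, (fun ω => w ω * μ[P a|𝒢] ω) * P a := by
    ext ω; simp [Finset.sum_apply]
  rw [hsum]
  filter_upwards [condExp_finsetSum (s := univ) (f := fun a => (fun ω => w ω * μ[P a|𝒢] ω) * P a)
      (fun a _ => integrable_mul_condExp_mul h𝒢 hP hw hbd a) 𝒢, ae_all_iff.2 hpull]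
    with ω hadd hmul
  rw [hadd, Finset.sum_apply, mul_sum]
  exact sum_congr rfl fun a _ => by rw [hmul a, Pi.mul_apply, sq]; ring

theorem ae_sum_sq_condExp_le_of_ae_sum_mul_condExp_le [IsFiniteMeasure μ] (h𝒢 : 𝒢 ≤ m0)
    {β : Type*} [Fintype β] {Q : β → Ω → ℝ} (hP : ∀ a, Integrable (P a) μ)
    (hQ : ∀ b, Integrable (Q b) μ)
    (h : ∀ᵐ ω ∂μ, ∑ a, P a ω * μ[P a|𝒢] ω ≤ ∑ b, Q b ω * μ[Q b|𝒢] ω) :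
    ∀ᵐ ω ∂μ, ∑ a, μ[P a|𝒢] ω ^ 2 ≤ ∑ b, μ[Q b|𝒢] ω ^ 2 := by
  set F : Ω → ℝ := fun ω => ∑ a, μ[P a|𝒢] ω ^ 2
  set G : Ω → ℝ := fun ω => ∑ b, μ[Q b|𝒢] ω ^ 2
  have hFG : ∀ ω, 0 < 1 + F ω + G ω := fun ω => by positivity
  -- `F` and `G` need not be integrable; the weight `w` makes every `w * μ[P a|𝒢]` bounded,
  -- so that it can be pulled out of the conditional expectation.
  set w : Ω → ℝ := fun ω => (1 + F ω + G ω)⁻¹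
  have hw : StronglyMeasurable[𝒢] w := by
    have hT a := (stronglyMeasurable_condExp (f := P a) (m := 𝒢) (μ := μ)).measurable
    have hM b := (stronglyMeasurable_condExp (f := Q b) (m := 𝒢) (μ := μ)).measurable
    exact Measurable.stronglyMeasurable (by fun_prop)
  have hbd (t : Ω → ℝ) (ht : ∀ ω, t ω ^ 2 ≤ F ω + G ω) (ω : Ω) : |w ω * t ω| ≤ 1 := by
    rw [abs_mul, abs_of_pos (inv_pos.2 (hFG ω)), inv_mul_le_one₀ (hFG ω)]
    nlinarith [sq_nonneg (|t ω| - 1), sq_abs (t ω), ht ω]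
  have hbdP : ∀ a ω, |w ω * μ[P a|𝒢] ω| ≤ 1 := fun a => hbd _ fun ω =>
    le_add_of_le_of_nonneg
      (single_le_sum (f := fun a => μ[P a|𝒢] ω ^ 2) (fun _ _ => sq_nonneg _) (mem_univ a))
      (by positivity)
  have hbdQ : ∀ b ω, |w ω * μ[Q b|𝒢] ω| ≤ 1 := fun b => hbd _ fun ω =>
    le_add_of_nonneg_of_le (by positivity)
      (single_le_sum (f := fun b => μ[Q b|𝒢] ω ^ 2) (fun _ _ => sq_nonneg _) (mem_univ b))
  have hmono : μ[fun ω => ∑ a, w ω * μ[P a|𝒢] ω * P a ω|𝒢] ≤ᵐ[μ]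
      μ[fun ω => ∑ b, w ω * μ[Q b|𝒢] ω * Q b ω|𝒢] :=
    condExp_mono (integrable_finsetSum _ fun a _ => integrable_mul_condExp_mul h𝒢 hP hw hbdP a)
      (integrable_finsetSum _ fun b _ => integrable_mul_condExp_mul h𝒢 hQ hw hbdQ b)
      (h.mono fun ω hω => by
        convert mul_le_mul_of_nonneg_left hω (inv_pos.2 (hFG ω)).le using 1 <;>
          rw [mul_sum] <;> exact sum_congr rfl fun _ _ => by ring)
  filter_upwards [hmono, condExp_sum_mul_condExp_mul h𝒢 hP hw hbdP,
    condExp_sum_mul_condExp_mul h𝒢 hQ hw hbdQ] with ω hle hPeq hQeq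
  rw [hPeq, hQeq] at hle
  exact le_of_mul_le_mul_left hle (inv_pos.2 (hFG ω))

end CondExp

section TensorMoments

variable {ι : Type*} [Fintype ι] {Y : Ω → ι → ℝ} {k : ℕ}

theorem integrable_prod_of_integrable_sqrt_sum_sq_pow (hY : Measurable Y)
    (hmom : Integrable (fun ω => √(∑ j, Y ω j ^ 2) ^ k) μ) (i : Fin k → ι) :
    Integrable (fun ω => ∏ l, Y ω (i l)) μ := by
  refine hmom.mono' (by fun_prop) (ae_of_all _ fun ω => ?_)
  rw [Real.norm_eq_abs, abs_prod, ← Fin.prod_const]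
  exact prod_le_prod (fun _ _ => abs_nonneg _) fun l _ => abs_le_sqrt_sum_sq (Y ω) (i l)

theorem integrable_mul_mul_sqrt_sum_sq_pow (hY : Measurable Y) (hk : 2 ≤ k)
    (hmom : Integrable (fun ω => √(∑ j, Y ω j ^ 2) ^ k) μ) (a b : ι) :
    Integrable (fun ω => Y ω a * Y ω b * √(∑ j, Y ω j ^ 2) ^ (k - 2)) μ := by
  refine hmom.mono' (by fun_prop) (ae_of_all _ fun ω => ?_)
  rw [Real.norm_eq_abs, abs_mul, abs_mul, abs_pow, abs_of_nonneg (Real.sqrt_nonneg _)]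
  calc |Y ω a| * |Y ω b| * √(∑ j, Y ω j ^ 2) ^ (k - 2)
      ≤ √(∑ j, Y ω j ^ 2) * √(∑ j, Y ω j ^ 2) * √(∑ j, Y ω j ^ 2) ^ (k - 2) := by
        gcongr <;> exact abs_le_sqrt_sum_sq (Y ω) _
    _ = √(∑ j, Y ω j ^ 2) ^ k := by rw [← sq, ← pow_add, Nat.add_sub_cancel' hk]

theorem sum_prod_mul_prod_le (hk : 2 ≤ k) (y v : ι → ℝ) :
    ∑ i : Fin k → ι, (∏ l, y (i l)) * ∏ l, v (i l) ≤
      ∑ p : ι × ι, y p.1 * y p.2 * √(∑ j, y j ^ 2) ^ (k - 2) *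
        (v p.1 * v p.2 * √(∑ j, v j ^ 2) ^ (k - 2)) := by
  rw [← sum_mul_pow_eq_sum_prod_mul_prod]
  calc (∑ j, y j * v j) ^ k
      ≤ (∑ j, y j * v j) ^ 2 * (√(∑ j, y j ^ 2) * √(∑ j, v j ^ 2)) ^ (k - 2) :=
        pow_le_sq_mul_pow_sub_two hk (abs_sum_mul_le_sqrt_mul_sqrt y v)
    _ = _ := by
      rw [sum_mul_sq_eq_sum_prod, sum_mul, mul_pow]
      exact sum_congr rfl fun _ _ => by ring

theorem ae_sum_prod_mul_condExp_le (hY : Measurable Y) (hk : 2 ≤ k)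
    (hmom : Integrable (fun ω => √(∑ j, Y ω j ^ 2) ^ k) μ) (𝒢 : MeasurableSpace Ω) (y : ι → ℝ) :
    ∀ᵐ ω ∂μ, ∑ i : Fin k → ι, (∏ l, y (i l)) * μ[fun ω => ∏ l, Y ω (i l)|𝒢] ω ≤
      ∑ p : ι × ι, y p.1 * y p.2 * √(∑ j, y j ^ 2) ^ (k - 2) *
        μ[fun ω => Y ω p.1 * Y ω p.2 * √(∑ j, Y ω j ^ 2) ^ (k - 2)|𝒢] ω := by
  have hP := integrable_prod_of_integrable_sqrt_sum_sq_pow hY hmom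
  have hQ (p : ι × ι) := integrable_mul_mul_sqrt_sum_sq_pow hY hk hmom p.1 p.2
  filter_upwards [condExp_mono (m := 𝒢)
      (integrable_finsetSum _ fun i _ => (hP i).const_mul _)
      (integrable_finsetSum _ fun p _ => (hQ p).const_mul _)
      (ae_of_all _ fun ω => sum_prod_mul_prod_le hk y (Y ω)),
    condExp_sum_const_mul _ hP, condExp_sum_const_mul _ hQ] with ω hle hPeq hQeq
  rwa [hPeq, hQeq] at hle

end TensorMoments

end Probability

/-- Tensor-moment comparison lemma: the Euclidean norm of the conditional
expectation of the k-fold tensor power is bounded by the Frobenius norm of the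
conditional expectation of `Y^{⊗2}|Y|^{k-2}`. -/
theorem stmt_7 {Ω : Type*} {m0 : MeasurableSpace Ω} (μ : Measure Ω) [IsProbabilityMeasure μ]
    (d k : ℕ) (hk : 2 ≤ k) (Y : Ω → Fin d → ℝ) (hY : Measurable Y)
    (hmom : Integrable (fun ω => (Real.sqrt (∑ i, Y ω i ^ 2)) ^ k) μ)
    (𝒢 : MeasurableSpace Ω) (h𝒢 : 𝒢 ≤ m0) :
    ∀ᵐ ω ∂μ,
      Real.sqrt (∑ i : Fin k → Fin d, (condExp 𝒢 μ (fun ω' => ∏ l, Y ω' (i l)) ω) ^ 2) ≤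
      Real.sqrt (∑ i, ∑ j, (condExp 𝒢 μ
        (fun ω' => Y ω' i * Y ω' j * (Real.sqrt (∑ i', Y ω' i' ^ 2)) ^ (k - 2)) ω) ^ 2) := by
  have hP := integrable_prod_of_integrable_sqrt_sum_sq_pow hY hmom
  have hQ (p : Fin d × Fin d) := integrable_mul_mul_sqrt_sum_sq_pow hY hk hmom p.1 p.2
  have hdiag := ae_forall_le_of_forall_ae_le (fun ω => by fun_prop) (fun ω => by fun_prop)
    (ae_sum_prod_mul_condExp_le hY hk hmom 𝒢)
  filter_upwards [ae_sum_sq_condExp_le_of_ae_sum_mul_condExp_le h𝒢 hP hQ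
    (hdiag.mono fun ω hω => hω (Y ω))] with ω hω
  rw [← Fintype.sum_prod_type']
  exact Real.sqrt_le_sqrt hω
end
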